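/- Let S_1, S_2, …, S_m be subsets of N = {1,…,n}. Then the subgroup Q_{S_1} ∩ Q_{S_2} ∩ … ∩ Q_{S_m} of the pure braid group P_n is generated by the set of monic commutators x such that σ(x) ∩ S_i ≠ ∅ for all 1 ≤ i ≤ m. -/

import Mathlib

/-!
Common setup: the pure braid group `P_n` as a presented group, the subgroups
`P_S` and `Q_S`, the characterization of the homomorphisms `φ_S`, the support
`σ(x)`, and monic commutators.
-/

/-- The free-group generator corresponding to the pure braid generator
`p_{a,b}` for `a < b` (indices in `Fin n`, so strand `i+1` of `{1,…,n}`
corresponds to `i : Fin n`). -/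
def pf {n : ℕ} (a b : Fin n) (h : a < b) :
    FreeGroup {q : Fin n × Fin n // q.1 < q.2} :=
  FreeGroup.of ⟨(a, b), h⟩

/-- The defining relations (A), (B), (C) of the pure braid group `P_n`,
each written in the form `lhs⁻¹ * rhs` for an equation `lhs = rhs`. -/
def braidRels (n : ℕ) : Set (FreeGroup {q : Fin n × Fin n // q.1 < q.2}) :=
  -- (A) first equality: p_{a,b} p_{a,c} p_{b,c} = p_{a,c} p_{b,c} p_{a,b}
  {r | ∃ (a b c : Fin n) (hab : a < b) (hbc : b < c),
      r = (pf a b hab * pf a c (hab.trans hbc) * pf b c hbc)⁻¹ *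
          (pf a c (hab.trans hbc) * pf b c hbc * pf a b hab)} ∪
  -- (A) second equality: p_{a,b} p_{a,c} p_{b,c} = p_{b,c} p_{a,b} p_{a,c}
  {r | ∃ (a b c : Fin n) (hab : a < b) (hbc : b < c),
      r = (pf a b hab * pf a c (hab.trans hbc) * pf b c hbc)⁻¹ *
          (pf b c hbc * pf a b hab * pf a c (hab.trans hbc))} ∪
  -- (B) first: p_{a,b} p_{c,d} = p_{c,d} p_{a,b}
  {r | ∃ (a b c d : Fin n) (hab : a < b) (hbc : b < c) (hcd : c < d),
      r = (pf a b hab * pf c d hcd)⁻¹ * (pf c d hcd * pf a b hab)} ∪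
  -- (B) second: p_{a,d} p_{b,c} = p_{b,c} p_{a,d}
  {r | ∃ (a b c d : Fin n) (hab : a < b) (hbc : b < c) (hcd : c < d),
      r = (pf a d (hab.trans (hbc.trans hcd)) * pf b c hbc)⁻¹ *
          (pf b c hbc * pf a d (hab.trans (hbc.trans hcd)))} ∪
  -- (C): p_{a,c} (p_{b,c}⁻¹ p_{b,d} p_{b,c}) = (p_{b,c}⁻¹ p_{b,d} p_{b,c}) p_{a,c}
  {r | ∃ (a b c d : Fin n) (hab : a < b) (hbc : b < c) (hcd : c < d),
      r = (pf a c (hab.trans hbc) * ((pf b c hbc)⁻¹ * pf b d (hbc.trans hcd) * pf b c hbc))⁻¹ *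
          ((pf b c hbc)⁻¹ * pf b d (hbc.trans hcd) * pf b c hbc * pf a c (hab.trans hbc))}

/-- The pure braid group `P_n`, given by the presentation above. -/
abbrev PB (n : ℕ) := PresentedGroup (braidRels n)

/-- The generator `p_{a,b}` of the pure braid group, for `a < b`. -/
def p {n : ℕ} (a b : Fin n) (h : a < b) : PB n := PresentedGroup.of ⟨(a, b), h⟩

/-- `P_S`: the subgroup of `P_n` generated by all `p_{a,b}` with `a ∈ S` and `b ∈ S`. -/
def PS {n : ℕ} (S : Set (Fin n)) : Subgroup (PB n) :=
  Subgroup.closure {x | ∃ (a b : Fin n) (h : a < b), a ∈ S ∧ b ∈ S ∧ x = p a b h}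

/-- `Q_S`: the subgroup of `P_n` generated by all `p_{a,b}` with `a ∈ S` or `b ∈ S`. -/
def QS {n : ℕ} (S : Set (Fin n)) : Subgroup (PB n) :=
  Subgroup.closure {x | ∃ (a b : Fin n) (h : a < b), (a ∈ S ∨ b ∈ S) ∧ x = p a b h}

/-- `IsPhi S φ` says that `φ : P_n → P_n` is the homomorphism `φ_S`, i.e. it sends
`p_{a,b}` to itself if `a ∉ S` and `b ∉ S`, and to `1` otherwise. -/
def IsPhi {n : ℕ} (S : Set (Fin n)) (φ : PB n →* PB n) : Prop :=
  ∀ (a b : Fin n) (h : a < b),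
    (a ∉ S ∧ b ∉ S → φ (p a b h) = p a b h) ∧ ((a ∈ S ∨ b ∈ S) → φ (p a b h) = 1)

/-- The support `σ(x)` of `x ∈ P_n`: the intersection of all `S` with `x ∈ P_S`. -/
def support {n : ℕ} (x : PB n) : Set (Fin n) := ⋂₀ {S | x ∈ PS S}

/-- Monic commutators: the smallest set of elements of `P_n` containing all
`p_{a,b}` and `p_{a,b}⁻¹` and closed under taking nontrivial commutators
`[x,y] = x⁻¹ y⁻¹ x y`. -/
inductive IsMonic {n : ℕ} : PB n → Prop
  | of (a b : Fin n) (h : a < b) : IsMonic (p a b h)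
  | inv (a b : Fin n) (h : a < b) : IsMonic (p a b h)⁻¹
  | comm (x y : PB n) : IsMonic x → IsMonic y → x⁻¹ * y⁻¹ * x * y ≠ 1 →
      IsMonic (x⁻¹ * y⁻¹ * x * y)

/-!
Everything rests on two facts about `Q_S`. It is normal: conjugating a generator that touches `S`
by one that does not stays in `Q_S`, using only the relations among the three or four strands
involved (for crossing pairs, relation (C)). And `φ_S`, which kills the generators touching `S`
and fixes the others, has `Q_S` in its kernel and fixes `P_T` for `T` disjoint from `S`. Using
`φ_{Tᶜ}`, the support of a nontrivial commutator of monic commutators is the union of their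
supports, so by normality a monic commutator lies in `Q_S` once its support meets `S`.

Conversely, by induction on `m`, an element `x` of `⋂_{i ≤ m+1} Q_{S_i}` is a product of monic
commutators whose supports meet `S_1, …, S_m`. Every monic commutator normalizes the subgroup
generated by the monic commutators whose support satisfies an upward-closed condition, so
`x = k f`, where `k` is generated by such commutators whose support also meets `S_{m+1}` and `f`
by monic commutators whose support misses it. Then `φ_{S_{m+1}}` kills `k` and fixes `f`, and
`x ∈ Q_{S_{m+1}}` forces `f = 1`.
-/

namespace Subgroup

variable {G : Type*} [Group G]

theorem conj_mem_closure_of_forall {s : Set G} {t : G} (h : ∀ g ∈ s, t * g * t⁻¹ ∈ closure s)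
    {z : G} (hz : z ∈ closure s) : t * z * t⁻¹ ∈ closure s := by
  have : closure s ≤ (closure s).comap (MulAut.conj t).toMonoidHom :=
    (closure_le _).2 fun g hg => by simpa using h g hg
  simpa using this hz

theorem mem_normalizer_closure_of_conj {s : Set G} {t : G}
    (h₁ : ∀ g ∈ s, t * g * t⁻¹ ∈ closure s) (h₂ : ∀ g ∈ s, t⁻¹ * g * t ∈ closure s) :
    t ∈ normalizer (closure s : Set G) := by
  refine mem_normalizer_iff.2 fun z => ⟨conj_mem_closure_of_forall h₁, fun hz => ?_⟩
  simpa [mul_assoc] using conj_mem_closure_of_forall (t := t⁻¹) (by simpa using h₂) hz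

theorem mem_normalizer_closure_insert {s : Set G} {t c : G}
    (hs : t ∈ normalizer (closure s : Set G))
    (hc₁ : t * c * t⁻¹ ∈ closure (insert c s)) (hc₂ : t⁻¹ * c * t ∈ closure (insert c s)) :
    t ∈ normalizer (closure (insert c s) : Set G) := by
  have hle : closure s ≤ closure (insert c s) := closure_mono (Set.subset_insert c s)
  refine mem_normalizer_closure_of_conj ?_ ?_ <;> rintro g (rfl | hg)
  exacts [hc₁, hle ((mem_normalizer_iff.1 hs g).1 (subset_closure hg)), hc₂,
    hle ((mem_normalizer_iff''.1 hs g).1 (subset_closure hg))]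

theorem mem_normalizer_closure_insert_of_commute {s : Set G} {t c : G}
    (hs : t ∈ normalizer (closure s : Set G)) (hc : Commute t c) :
    t ∈ normalizer (closure (insert c s) : Set G) := by
  have hc' : c ∈ closure (insert c s) := subset_closure (Set.mem_insert c s)
  refine mem_normalizer_closure_insert hs ?_ ?_
  · rwa [hc.mul_inv_cancel]
  · have : t⁻¹ * c * t = c := by simpa using hc.inv_left.mul_inv_cancel
    rwa [this]

theorem mem_normalizer_closure_singleton_of_commute {t c : G} (hc : Commute t c) :
    t ∈ normalizer (closure {c} : Set G) := by
  simpa using mem_normalizer_closure_insert_of_commute (s := ∅)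
    (by rw [closure_empty, normalizer_eq_top]; trivial) hc

/-- If `t` commutes with `e⁻¹ g e`, then conjugating `g` by `t^{±1}` amounts to conjugating
`e⁻¹ g e` by `t^{±1} e t^{∓1}`. -/
theorem mem_normalizer_closure_insert_of_commute_conj {s : Set G} {L : Subgroup G} {t e g : G}
    (hs : t ∈ normalizer (closure s : Set G)) (hL : L ≤ normalizer (closure (insert g s) : Set G))
    (ht : t ∈ normalizer (L : Set G)) (he : e ∈ L) (hc : Commute t (e⁻¹ * g * e)) :
    t ∈ normalizer (closure (insert g s) : Set G) := by
  have hg : e⁻¹ * g * e ∈ closure (insert g s) :=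
    (mem_normalizer_iff''.1 (hL he) g).1 (subset_closure (Set.mem_insert g s))
  refine mem_normalizer_closure_insert hs ?_ ?_
  · have hte : t * e * t⁻¹ ∈ L := (mem_normalizer_iff.1 ht e).1 he
    rw [show t * g * t⁻¹ = (t * e * t⁻¹) * (t * (e⁻¹ * g * e) * t⁻¹) * (t * e * t⁻¹)⁻¹ by
      group, hc.mul_inv_cancel]
    exact (mem_normalizer_iff.1 (hL hte) _).1 hg
  · have hte : t⁻¹ * e * t ∈ L := (mem_normalizer_iff''.1 ht e).1 he
    have hc' : t⁻¹ * (e⁻¹ * g * e) * t = e⁻¹ * g * e := by simpa using hc.inv_left.mul_inv_cancel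
    rw [show t⁻¹ * g * t = (t⁻¹ * e * t) * (t⁻¹ * (e⁻¹ * g * e) * t) * (t⁻¹ * e * t)⁻¹ by
      group, hc']
    exact (mem_normalizer_iff.1 (hL hte) _).1 hg

theorem mem_normalizer_closure_pair_of_rotate {a b c : G} (h₁ : a * b * c = b * c * a)
    (h₂ : a * b * c = c * a * b) : a ∈ normalizer (closure {b, c} : Set G) := by
  have hb : b ∈ closure {b, c} := subset_closure (by simp)
  have hc : c ∈ closure {b, c} := subset_closure (by simp)
  have hab : a * b * a⁻¹ = c⁻¹ * b * c := by
    calc a * b * a⁻¹ = c⁻¹ * (c * a * b) * a⁻¹ := by group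
      _ = c⁻¹ * (b * c * a) * a⁻¹ := by rw [← h₂, h₁]
      _ = c⁻¹ * b * c := by group
  have hac : a⁻¹ * c * a = b * c * b⁻¹ := by
    calc a⁻¹ * c * a = a⁻¹ * (c * a * b) * b⁻¹ := by group
      _ = a⁻¹ * (a * b * c) * b⁻¹ := by rw [← h₂]
      _ = b * c * b⁻¹ := by group
  have habc : Commute a (b * c) := by rw [commute_iff_eq, ← mul_assoc, h₁, mul_assoc]
  have hac' : a * c * a⁻¹ = (c⁻¹ * b * c)⁻¹ * (b * c) := by
    rw [← hab, ← habc.mul_inv_cancel]; group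
  have hab' : a⁻¹ * b * a = b * c * (b * c * b⁻¹)⁻¹ := by
    have : a⁻¹ * (b * c) * a = b * c := by simpa using habc.inv_left.mul_inv_cancel
    rw [← hac, ← this]; group
  refine mem_normalizer_closure_of_conj ?_ ?_ <;>
    simp only [Set.mem_insert_iff, Set.mem_singleton_iff, forall_eq_or_imp, forall_eq]
  · rw [hab, hac']
    exact ⟨mul_mem (mul_mem (inv_mem hc) hb) hc,
      mul_mem (inv_mem (mul_mem (mul_mem (inv_mem hc) hb) hc)) (mul_mem hb hc)⟩
  · rw [hab', hac]
    exact ⟨mul_mem (mul_mem hb hc) (inv_mem (mul_mem (mul_mem hb hc) (inv_mem hb))),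
      mul_mem (mul_mem hb hc) (inv_mem hb)⟩

theorem Normal.inv_mul_inv_mul_mul_mem {N : Subgroup G} (hN : N.Normal) {u v : G}
    (h : u ∈ N ∨ v ∈ N) : u⁻¹ * v⁻¹ * u * v ∈ N := by
  rcases h with hu | hv
  · rw [show u⁻¹ * v⁻¹ * u * v = u⁻¹ * (v⁻¹ * u * v⁻¹⁻¹) by group]
    exact mul_mem (inv_mem hu) (hN.conj_mem u hu v⁻¹)
  · rw [show u⁻¹ * v⁻¹ * u * v = u⁻¹ * v⁻¹ * u⁻¹⁻¹ * v by group]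
    exact mul_mem (hN.conj_mem _ (inv_mem hv) u⁻¹) hv

end Subgroup

namespace PureBraid

open Subgroup

variable {n : ℕ}

section Relations

variable {i j k l : Fin n}

theorem relA₁ (hij : i < j) (hjk : j < k) :
    p i j hij * p i k (hij.trans hjk) * p j k hjk =
      p i k (hij.trans hjk) * p j k hjk * p i j hij :=
  inv_mul_eq_one.1 <| PresentedGroup.one_of_mem (rels := braidRels n)
    (Or.inl (Or.inl (Or.inl (Or.inl ⟨i, j, k, hij, hjk, rfl⟩))))

theorem relA₂ (hij : i < j) (hjk : j < k) :
    p i j hij * p i k (hij.trans hjk) * p j k hjk =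
      p j k hjk * p i j hij * p i k (hij.trans hjk) :=
  inv_mul_eq_one.1 <| PresentedGroup.one_of_mem (rels := braidRels n)
    (Or.inl (Or.inl (Or.inl (Or.inr ⟨i, j, k, hij, hjk, rfl⟩))))

theorem relB₁ (hij : i < j) (hjk : j < k) (hkl : k < l) :
    Commute (p i j hij) (p k l hkl) :=
  inv_mul_eq_one.1 <| PresentedGroup.one_of_mem (rels := braidRels n)
    (Or.inl (Or.inl (Or.inr ⟨i, j, k, l, hij, hjk, hkl, rfl⟩)))

theorem relB₂ (hij : i < j) (hjk : j < k) (hkl : k < l) :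
    Commute (p i l (hij.trans (hjk.trans hkl))) (p j k hjk) :=
  inv_mul_eq_one.1 <| PresentedGroup.one_of_mem (rels := braidRels n)
    (Or.inl (Or.inr ⟨i, j, k, l, hij, hjk, hkl, rfl⟩))

theorem relC (hij : i < j) (hjk : j < k) (hkl : k < l) :
    Commute (p i k (hij.trans hjk)) ((p j k hjk)⁻¹ * p j l (hjk.trans hkl) * p j k hjk) :=
  inv_mul_eq_one.1 <| PresentedGroup.one_of_mem (rels := braidRels n)
    (Or.inr ⟨i, j, k, l, hij, hjk, hkl, rfl⟩)

theorem relC' (hij : i < j) (hjk : j < k) (hkl : k < l) :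
    Commute (p j l (hjk.trans hkl)) (p j k hjk * p i k (hij.trans hjk) * (p j k hjk)⁻¹) := by
  have h := (Commute.conj_iff (p j k hjk)).2 (relC hij hjk hkl)
  simpa [mul_assoc] using h.symm

theorem p_ij_mem_normalizer (hij : i < j) (hjk : j < k) :
    p i j hij ∈ normalizer (closure {p i k (hij.trans hjk), p j k hjk} : Set (PB n)) :=
  mem_normalizer_closure_pair_of_rotate (relA₁ hij hjk) (relA₂ hij hjk)

theorem p_ik_mem_normalizer (hij : i < j) (hjk : j < k) :
    p i k (hij.trans hjk) ∈ normalizer (closure {p j k hjk, p i j hij} : Set (PB n)) :=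
  mem_normalizer_closure_pair_of_rotate ((relA₁ hij hjk).symm.trans (relA₂ hij hjk))
    (relA₁ hij hjk).symm

theorem p_jk_mem_normalizer (hij : i < j) (hjk : j < k) :
    p j k hjk ∈ normalizer (closure {p i j hij, p i k (hij.trans hjk)} : Set (PB n)) :=
  mem_normalizer_closure_pair_of_rotate (relA₂ hij hjk).symm
    ((relA₂ hij hjk).symm.trans (relA₁ hij hjk))

section Crossing

/-! For `i < j < k < l`, `star_j` names the subgroup generated by the three generators on these
strands that touch `j`, and so on. -/

variable (hij : i < j) (hjk : j < k) (hkl : k < l)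
include hij hjk hkl

theorem p_ik_mem_normalizer_star_j :
    p i k (hij.trans hjk) ∈ normalizer
      (closure {p j l (hjk.trans hkl), p j k hjk, p i j hij} : Set (PB n)) :=
  mem_normalizer_closure_insert_of_commute_conj (p_ik_mem_normalizer hij hjk)
    ((Subgroup.closure_mono (Set.subset_insert _ _)).trans le_normalizer)
    (p_ik_mem_normalizer hij hjk)
    (subset_closure (Set.mem_insert _ _)) (relC hij hjk hkl)

theorem p_ik_mem_normalizer_star_l :
    p i k (hij.trans hjk) ∈ normalizer
      (closure {p j l (hjk.trans hkl), p i l (hij.trans (hjk.trans hkl)), p k l hkl} :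
        Set (PB n)) := by
  refine mem_normalizer_closure_insert_of_commute_conj (p_ij_mem_normalizer (hij.trans hjk) hkl)
    ((closure_le _).2 (Set.pair_subset (SetLike.mem_coe.2 ?_) (SetLike.mem_coe.2 ?_)))
    (p_ik_mem_normalizer hij hjk)
    (subset_closure (Set.mem_insert _ _)) (relC hij hjk hkl)
  · convert mem_normalizer_closure_insert_of_commute (p_ij_mem_normalizer hjk hkl)
      (relB₂ hij hjk hkl).symm using 4
    exact Set.insert_comm _ _ _
  · convert mem_normalizer_closure_insert_of_commute (p_ij_mem_normalizer hij (hjk.trans hkl))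
      (relB₁ hij hjk hkl) using 4
    ext; simp only [Set.mem_insert_iff, Set.mem_singleton_iff]; tauto

theorem p_jl_mem_normalizer_star_i :
    p j l (hjk.trans hkl) ∈ normalizer
      (closure {p i k (hij.trans hjk), p i j hij, p i l (hij.trans (hjk.trans hkl))} :
        Set (PB n)) := by
  refine mem_normalizer_closure_insert_of_commute_conj (p_jk_mem_normalizer hij (hjk.trans hkl))
    ((closure_le _).2 (Set.pair_subset (SetLike.mem_coe.2 ?_) (SetLike.mem_coe.2 ?_)))
    (p_ik_mem_normalizer hjk hkl)
    (inv_mem (subset_closure (Set.mem_insert_of_mem _ rfl))) (by simpa using relC' hij hjk hkl)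
  · convert mem_normalizer_closure_insert_of_commute (p_jk_mem_normalizer (hij.trans hjk) hkl)
      (relB₁ hij hjk hkl).symm using 4
    exact Set.insert_comm _ _ _
  · convert mem_normalizer_closure_insert_of_commute (p_jk_mem_normalizer hij hjk)
      (relB₂ hij hjk hkl).symm using 4
    ext; simp only [Set.mem_insert_iff, Set.mem_singleton_iff]; tauto

theorem p_jl_mem_normalizer_star_k :
    p j l (hjk.trans hkl) ∈ normalizer
      (closure {p i k (hij.trans hjk), p k l hkl, p j k hjk} : Set (PB n)) :=
  mem_normalizer_closure_insert_of_commute_conj (p_ik_mem_normalizer hjk hkl)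
    ((Subgroup.closure_mono (Set.subset_insert _ _)).trans le_normalizer)
    (p_ik_mem_normalizer hjk hkl)
    (inv_mem (subset_closure (Set.mem_insert_of_mem _ rfl))) (by simpa using relC' hij hjk hkl)

end Crossing

end Relations

section Normal

variable {S : Set (Fin n)}

theorem p_mem_QS {a b : Fin n} (hab : a < b) (hS : a ∈ S ∨ b ∈ S) : p a b hab ∈ QS S :=
  subset_closure ⟨a, b, hab, hS, rfl⟩

theorem exists_subset_QS_of_lt {a b x y : Fin n} (hab : a < b) (hxy : x < y) (hax : a < x)
    (hS : a ∈ S ∨ b ∈ S) (hx : x ∉ S) (hy : y ∉ S) : ∃ X ⊆ (QS S : Set (PB n)),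
      p a b hab ∈ X ∧ p x y hxy ∈ normalizer (closure X : Set (PB n)) := by
  rcases lt_trichotomy b x with hbx | rfl | hxb
  · exact ⟨_, Set.singleton_subset_iff.2 (p_mem_QS hab hS), rfl,
      mem_normalizer_closure_singleton_of_commute (relB₁ hab hbx hxy).symm⟩
  · have ha := hS.resolve_right hx
    exact ⟨_, by simp [Set.insert_subset_iff, p_mem_QS, ha], by simp,
      p_jk_mem_normalizer hab hxy⟩
  rcases lt_trichotomy b y with hby | rfl | hyb
  · rcases hS with ha | hb
    · exact ⟨_, by simp [Set.insert_subset_iff, p_mem_QS, ha], by simp,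
        p_jl_mem_normalizer_star_i hax hxb hby⟩
    · exact ⟨_, by simp [Set.insert_subset_iff, p_mem_QS, hb], by simp,
        p_jl_mem_normalizer_star_k hax hxb hby⟩
  · have ha := hS.resolve_right hy
    exact ⟨_, by simp [Set.insert_subset_iff, p_mem_QS, ha], by simp,
      p_jk_mem_normalizer hax hxy⟩
  · exact ⟨_, Set.singleton_subset_iff.2 (p_mem_QS hab hS), rfl,
      mem_normalizer_closure_singleton_of_commute (relB₂ hax hxy hyb).symm⟩

theorem exists_subset_QS_of_eq {a b y : Fin n} (hab : a < b) (hay : a < y) (hb : b ∈ S)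
    (hy : y ∉ S) : ∃ X ⊆ (QS S : Set (PB n)),
      p a b hab ∈ X ∧ p a y hay ∈ normalizer (closure X : Set (PB n)) := by
  rcases lt_trichotomy b y with hby | rfl | hyb
  · exact ⟨_, by simp [Set.insert_subset_iff, p_mem_QS, hb], by simp,
      p_ik_mem_normalizer hab hby⟩
  · exact absurd hb hy
  · exact ⟨_, by simp [Set.insert_subset_iff, p_mem_QS, hb], by simp,
      p_ij_mem_normalizer hay hyb⟩

theorem exists_subset_QS_of_gt {a b x y : Fin n} (hab : a < b) (hxy : x < y) (hxa : x < a)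
    (hS : a ∈ S ∨ b ∈ S) (hy : y ∉ S) : ∃ X ⊆ (QS S : Set (PB n)),
      p a b hab ∈ X ∧ p x y hxy ∈ normalizer (closure X : Set (PB n)) := by
  rcases lt_trichotomy y a with hya | rfl | hay
  · exact ⟨_, Set.singleton_subset_iff.2 (p_mem_QS hab hS), rfl,
      mem_normalizer_closure_singleton_of_commute (relB₁ hxy hya hab)⟩
  · have hb := hS.resolve_left hy
    exact ⟨_, by simp [Set.insert_subset_iff, p_mem_QS, hb], by simp,
      p_ij_mem_normalizer hxy hab⟩
  rcases lt_trichotomy b y with hby | rfl | hyb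
  · exact ⟨_, Set.singleton_subset_iff.2 (p_mem_QS hab hS), rfl,
      mem_normalizer_closure_singleton_of_commute (relB₂ hxa hab hby)⟩
  · have ha := hS.resolve_right hy
    exact ⟨_, by simp [Set.insert_subset_iff, p_mem_QS, ha], by simp,
      p_ik_mem_normalizer hxa hab⟩
  · rcases hS with ha | hb
    · exact ⟨_, by simp [Set.insert_subset_iff, p_mem_QS, ha], by simp,
        p_ik_mem_normalizer_star_j hxa hay hyb⟩
    · exact ⟨_, by simp [Set.insert_subset_iff, p_mem_QS, hb], by simp,
        p_ik_mem_normalizer_star_l hxa hay hyb⟩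

theorem exists_subset_QS {a b x y : Fin n} (hab : a < b) (hxy : x < y) (hS : a ∈ S ∨ b ∈ S)
    (hx : x ∉ S) (hy : y ∉ S) : ∃ X ⊆ (QS S : Set (PB n)),
      p a b hab ∈ X ∧ p x y hxy ∈ normalizer (closure X : Set (PB n)) := by
  rcases lt_trichotomy a x with hax | rfl | hxa
  · exact exists_subset_QS_of_lt hab hxy hax hS hx hy
  · exact exists_subset_QS_of_eq hab hxy (hS.resolve_left hx) hy
  · exact exists_subset_QS_of_gt hab hxy hxa hS hy

theorem p_mem_normalizer_QS {x y : Fin n} (hxy : x < y) :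
    p x y hxy ∈ normalizer (QS S : Set (PB n)) := by
  by_cases hxyS : x ∈ S ∨ y ∈ S
  · exact le_normalizer (p_mem_QS hxy hxyS)
  obtain ⟨hx, hy⟩ := not_or.1 hxyS
  refine mem_normalizer_closure_of_conj ?_ ?_ <;> rintro _ ⟨a, b, hab, hS, rfl⟩ <;>
    obtain ⟨X, hXS, hgX, hX⟩ := exists_subset_QS hab hxy hS hx hy
  · exact (closure_le _).2 hXS ((mem_normalizer_iff.1 hX _).1 (subset_closure hgX))
  · exact (closure_le _).2 hXS ((mem_normalizer_iff''.1 hX _).1 (subset_closure hgX))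

theorem QS_normal (S : Set (Fin n)) : (QS S).Normal := by
  rw [← normalizer_eq_top_iff, eq_top_iff, ← PresentedGroup.closure_range_of, closure_le]
  rintro _ ⟨⟨⟨x, y⟩, hxy⟩, rfl⟩
  exact p_mem_normalizer_QS hxy

end Normal

open scoped Classical in
/-- The map `φ_S`. It respects the relations because deleting the generators that touch `S` from
a defining relation leaves either the same relation or a trivial one. -/
noncomputable def phi (S : Set (Fin n)) : PB n →* PB n :=
  PresentedGroup.toGroup (f := fun q => if q.1.1 ∈ S ∨ q.1.2 ∈ S then 1 else p q.1.1 q.1.2 q.2)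
    (by
      rintro r ((((⟨a, b, c, hab, hbc, rfl⟩ | ⟨a, b, c, hab, hbc, rfl⟩) |
        ⟨a, b, c, d, hab, hbc, hcd, rfl⟩) | ⟨a, b, c, d, hab, hbc, hcd, rfl⟩) |
        ⟨a, b, c, d, hab, hbc, hcd, rfl⟩) <;>
      simp only [map_mul, map_inv, pf, FreeGroup.lift_apply_of, inv_mul_eq_one] <;>
      split_ifs <;>
      first
      | exact relA₁ hab hbc
      | exact relA₂ hab hbc
      | exact relB₁ hab hbc hcd
      | exact relB₂ hab hbc hcd
      | exact relC hab hbc hcd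
      | simp_all)

section Retraction

variable {S T : Set (Fin n)} {a b : Fin n}

theorem phi_p_of_touch (hab : a < b) (hS : a ∈ S ∨ b ∈ S) : phi S (p a b hab) = 1 :=
  (PresentedGroup.toGroup.of _).trans (if_pos hS)

theorem phi_p_of_not_touch (hab : a < b) (hS : ¬(a ∈ S ∨ b ∈ S)) :
    phi S (p a b hab) = p a b hab :=
  (PresentedGroup.toGroup.of _).trans (if_neg hS)

theorem QS_le_ker_phi (S : Set (Fin n)) : QS S ≤ (phi S).ker :=
  (closure_le _).2 fun _ ⟨_, _, hab, hS, hg⟩ => hg ▸ phi_p_of_touch hab hS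

theorem phi_eq_self_of_mem_PS (hST : Disjoint S T) {x : PB n} (hx : x ∈ PS T) :
    phi S x = x := by
  have : PS T ≤ (phi S).eqLocus (MonoidHom.id _) :=
    (closure_le _).2 fun _ ⟨a, b, hab, ha, hb, hg⟩ => hg ▸ phi_p_of_not_touch hab
      fun h => h.elim (hST.notMem_of_mem_right ha) (hST.notMem_of_mem_right hb)
  exact this hx

theorem p_ne_one (hab : a < b) : p a b hab ≠ 1 := by
  let degree : PB n →* Multiplicative ℤ :=
    PresentedGroup.toGroup (f := fun _ => Multiplicative.ofAdd 1) (by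
      rintro r ((((⟨a, b, c, hab, hbc, rfl⟩ | ⟨a, b, c, hab, hbc, rfl⟩) |
        ⟨a, b, c, d, hab, hbc, hcd, rfl⟩) | ⟨a, b, c, d, hab, hbc, hcd, rfl⟩) |
        ⟨a, b, c, d, hab, hbc, hcd, rfl⟩) <;> simp [pf] <;> group)
  intro h
  have := congrArg (fun x => Multiplicative.toAdd (degree x)) h
  simp [degree, p] at this

theorem p_mem_PS (hab : a < b) (ha : a ∈ T) (hb : b ∈ T) :
    p a b hab ∈ PS T :=
  subset_closure ⟨a, b, hab, ha, hb, rfl⟩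

theorem p_mem_PS_iff (hab : a < b) : p a b hab ∈ PS T ↔ a ∈ T ∧ b ∈ T := by
  refine ⟨fun h => ?_, fun h => p_mem_PS hab h.1 h.2⟩
  by_contra hT
  have := phi_eq_self_of_mem_PS disjoint_compl_left h
  rw [phi_p_of_touch hab (not_and_or.1 hT)] at this
  exact p_ne_one hab this.symm

theorem PS_mono (hST : S ⊆ T) : PS S ≤ PS T :=
  closure_mono fun _ ⟨a, b, hab, ha, hb, hg⟩ => ⟨a, b, hab, hST ha, hST hb, hg⟩

theorem support_p (hab : a < b) : support (p a b hab) = {a, b} := by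
  ext s
  simp only [support, Set.mem_sInter, Set.mem_ofPred_eq, p_mem_PS_iff]
  refine ⟨fun h => h {a, b} ⟨Set.mem_insert _ _, Set.mem_insert_of_mem _ rfl⟩, ?_⟩
  rintro (rfl | rfl) T ⟨ha, hb⟩ <;> assumption

theorem support_inv (x : PB n) : support x⁻¹ = support x := by
  simp only [support, inv_mem_iff]

variable {u v : PB n}

theorem commutator_mem_PS_union {A B : Set (Fin n)} (hu : u ∈ PS A) (hv : v ∈ PS B) :
    u⁻¹ * v⁻¹ * u * v ∈ PS (A ∪ B) := by
  have hu' : u ∈ PS (A ∪ B) := PS_mono Set.subset_union_left hu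
  have hv' : v ∈ PS (A ∪ B) := PS_mono Set.subset_union_right hv
  exact mul_mem (mul_mem (mul_mem (inv_mem hu') (inv_mem hv')) hu') hv'

theorem support_commutator (hu : u ∈ PS (support u)) (hv : v ∈ PS (support v))
    (hu' : ∀ S, (support u ∩ S).Nonempty → u ∈ QS S)
    (hv' : ∀ S, (support v ∩ S).Nonempty → v ∈ QS S) (hne : u⁻¹ * v⁻¹ * u * v ≠ 1) :
    support (u⁻¹ * v⁻¹ * u * v) = support u ∪ support v := by
  refine (Set.sInter_subset_of_mem (commutator_mem_PS_union hu hv)).antisymm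
    fun s hs T hT => by_contra fun hsT => hne ?_
  -- `φ_{Tᶜ}` fixes the commutator (it lies in `P_T`) and kills it (`u` or `v` lies in `Q_{Tᶜ}`).
  rw [← phi_eq_self_of_mem_PS disjoint_compl_left hT]
  refine QS_le_ker_phi Tᶜ ((QS_normal Tᶜ).inv_mul_inv_mul_mul_mem ?_)
  exact hs.imp (fun h => hu' _ ⟨s, h, hsT⟩) (fun h => hv' _ ⟨s, h, hsT⟩)

end Retraction

end PureBraid

namespace IsMonic

open Subgroup PureBraid

variable {n : ℕ} {S : Set (Fin n)} {x u v : PB n}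

theorem mem_PS_support_and_mem_QS (hx : IsMonic x) :
    x ∈ PS (support x) ∧ ∀ S, (support x ∩ S).Nonempty → x ∈ QS S := by
  induction hx with
  | of a b hab =>
    rw [support_p]
    refine ⟨p_mem_PS hab (Set.mem_insert _ _) (Set.mem_insert_of_mem _ rfl), ?_⟩
    rintro S ⟨s, rfl | rfl, hs⟩
    exacts [p_mem_QS hab (.inl hs), p_mem_QS hab (.inr hs)]
  | inv a b hab =>
    rw [support_inv, support_p]
    refine ⟨inv_mem (p_mem_PS hab (Set.mem_insert _ _) (Set.mem_insert_of_mem _ rfl)), ?_⟩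
    rintro S ⟨s, rfl | rfl, hs⟩
    exacts [inv_mem (p_mem_QS hab (.inl hs)), inv_mem (p_mem_QS hab (.inr hs))]
  | comm u v _ _ hne ihu ihv =>
    rw [support_commutator ihu.1 ihv.1 ihu.2 ihv.2 hne]
    refine ⟨commutator_mem_PS_union ihu.1 ihv.1, ?_⟩
    rintro S ⟨s, hs, hsS⟩
    exact (QS_normal S).inv_mul_inv_mul_mul_mem
      (hs.imp (fun h => ihu.2 S ⟨s, h, hsS⟩) (fun h => ihv.2 S ⟨s, h, hsS⟩))

theorem mem_QS (hx : IsMonic x) (hS : (support x ∩ S).Nonempty) : x ∈ QS S :=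
  hx.mem_PS_support_and_mem_QS.2 S hS

theorem phi_eq_self (hx : IsMonic x) (hS : Disjoint (support x) S) : phi S x = x :=
  phi_eq_self_of_mem_PS hS.symm hx.mem_PS_support_and_mem_QS.1

theorem support_commutator (hu : IsMonic u) (hv : IsMonic v)
    (hne : u⁻¹ * v⁻¹ * u * v ≠ 1) : support (u⁻¹ * v⁻¹ * u * v) = support u ∪ support v :=
  PureBraid.support_commutator hu.mem_PS_support_and_mem_QS.1 hv.mem_PS_support_and_mem_QS.1
    hu.mem_PS_support_and_mem_QS.2 hv.mem_PS_support_and_mem_QS.2 hne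

theorem isMonic_inv (hx : IsMonic x) : IsMonic x⁻¹ := by
  induction hx with
  | of a b hab => exact .inv a b hab
  | inv a b hab => simpa using IsMonic.of a b hab
  | comm u v hu hv hne _ _ =>
    have e : (u⁻¹ * v⁻¹ * u * v)⁻¹ = v⁻¹ * u⁻¹ * v * u := by group
    rw [e]
    exact .comm v u hv hu (e ▸ inv_ne_one.2 hne)

end IsMonic

namespace PureBraid

open Subgroup
open scoped Pointwise

variable {n : ℕ}

def monicWith (P : Set (Fin n) → Prop) : Set (PB n) := {x | IsMonic x ∧ P (support x)}

variable {P : Set (Fin n) → Prop}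

theorem conj_mem_closure_monicWith (hP : Monotone P) {g h : PB n} (hg : g ∈ monicWith P)
    (hh : IsMonic h) : h * g * h⁻¹ ∈ closure (monicWith P) := by
  have hgK : g ∈ closure (monicWith P) := subset_closure hg
  rw [show h * g * h⁻¹ = g * (g⁻¹ * h⁻¹⁻¹ * g * h⁻¹) by group]
  by_cases hne : g⁻¹ * h⁻¹⁻¹ * g * h⁻¹ = 1
  · rwa [hne, mul_one]
  refine mul_mem hgK (subset_closure ⟨.comm g h⁻¹ hg.1 hh.isMonic_inv hne, ?_⟩)
  rw [hg.1.support_commutator hh.isMonic_inv hne]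
  exact hP Set.subset_union_left hg.2

theorem mem_normalizer_closure_monicWith (hP : Monotone P) {h : PB n}
    (hh : IsMonic h) : h ∈ normalizer (closure (monicWith P) : Set (PB n)) :=
  mem_normalizer_closure_of_conj (fun _ hg => conj_mem_closure_monicWith hP hg hh)
    (fun _ hg => by simpa using conj_mem_closure_monicWith hP hg hh.isMonic_inv)

theorem closure_monicWith_inf_QS_le (hP : Monotone P) (T : Set (Fin n)) :
    closure (monicWith P) ⊓ QS T ≤
      closure (monicWith fun A => P A ∧ (A ∩ T).Nonempty) := by
  rintro x ⟨hx, hxT⟩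
  set K := closure (monicWith fun A => P A ∧ (A ∩ T).Nonempty)
  set F := closure (monicWith fun A => Disjoint A T)
  have hKF : closure (monicWith P) ≤ K ⊔ F := by
    refine (closure_le _).2 fun g hg => ?_
    by_cases hgT : (support g ∩ T).Nonempty
    · exact mem_sup_left (subset_closure ⟨hg.1, hg.2, hgT⟩)
    · exact mem_sup_right (subset_closure ⟨hg.1, Set.disjoint_iff_inter_eq_empty.2
        (Set.not_nonempty_iff_eq_empty.1 hgT)⟩)
  have hFK : F ≤ normalizer (K : Set (PB n)) := (closure_le _).2 fun g hg =>
    mem_normalizer_closure_monicWith (fun A B hAB hA =>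
      ⟨hP hAB hA.1, hA.2.mono (Set.inter_subset_inter_left T hAB)⟩) hg.1
  have hK : K ≤ (phi T).ker := (closure_le _).2 fun g hg => QS_le_ker_phi T (hg.1.mem_QS hg.2.2)
  have hF : F ≤ (phi T).eqLocus (MonoidHom.id _) :=
    (closure_le _).2 fun g hg => hg.1.phi_eq_self hg.2
  obtain ⟨k, hk, f, hf, rfl⟩ : x ∈ (K : Set (PB n)) * (F : Set (PB n)) := by
    rw [← coe_mul_of_right_le_normalizer_left K F hFK]
    exact hKF hx
  have hf1 : f = 1 := by
    simpa [(MonoidHom.mem_ker).1 (hK hk), show phi T f = f from hF hf] using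
      QS_le_ker_phi T hxT
  simpa [hf1] using hk

theorem iInf_QS_le_closure_monicWith (m : ℕ) (S : Fin m → Set (Fin n)) :
    ⨅ i, QS (S i) ≤ closure (monicWith fun A => ∀ i, A ∩ S i ≠ ∅) := by
  induction m with
  | zero =>
    refine le_top.trans ?_
    rw [← PresentedGroup.closure_range_of, closure_le]
    rintro _ ⟨⟨⟨a, b⟩, hab⟩, rfl⟩
    exact subset_closure ⟨.of a b hab, finZeroElim⟩
  | succ m ih =>
    intro x hx
    have hmono : Monotone fun A : Set (Fin n) => ∀ i : Fin m, A ∩ S i.castSucc ≠ ∅ :=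
      fun A B hAB hA i => ((Set.nonempty_iff_ne_empty.2 (hA i)).mono
        (Set.inter_subset_inter_left _ hAB)).ne_empty
    refine closure_mono ?_ (closure_monicWith_inf_QS_le hmono (S (Fin.last m))
      ⟨ih _ (mem_iInf.2 fun i => mem_iInf.1 hx i.castSucc), mem_iInf.1 hx (Fin.last m)⟩)
    rintro y ⟨hy, hS, hT⟩
    exact ⟨hy, Fin.lastCases hT.ne_empty hS⟩

end PureBraid

open PureBraid in
theorem inf_QS_eq_closure_general (n m : ℕ) (S : Fin m → Set (Fin n)) :
    (⨅ i, QS (S i)) =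
      Subgroup.closure {x : PB n | IsMonic x ∧ ∀ i, support x ∩ S i ≠ ∅} :=
  (iInf_QS_le_closure_monicWith m S).antisymm <| (Subgroup.closure_le _).2 fun _ hx =>
    Subgroup.mem_iInf.2 fun i => hx.1.mem_QS (Set.nonempty_iff_ne_empty.2 (hx.2 i))

/-- Theorem 2.1: `Q_{S_1} ∩ ⋯ ∩ Q_{S_m}` is generated by the
monic commutators `x` with `σ(x) ∩ S_i ≠ ∅` for all `i`. -/
theorem inf_QS_eq_closure (n m : ℕ) (hn : 0 < n) (S : Fin m → Set (Fin n)) :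
    (⨅ i, QS (S i)) =
      Subgroup.closure {x : PB n | IsMonic x ∧ ∀ i, support x ∩ S i ≠ ∅} :=
  inf_QS_eq_closure_general n m S
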